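/- arXiv:1907.00615 — 6 statements merged into one kernel-verified Lean document; each statement's English description precedes it below -/
import Mathlib

section
/- Every compact semigroup contains a minimal idempotent. That is, if K is a nonempty compact Hausdorff topological space equipped with an associative multiplication such that for every b ∈ K the map a ↦ a·b is continuous, then there exists an idempotent e ∈ K (i.e. e·e = e) such that every idempotent f ∈ K satisfying f·e = e·f = f is equal to e. -/
/-! A minimal compact left ideal `L` exists by Zorn's lemma (intersections of chains stay nonempty
by compactness), and it contains an idempotent `e` since it is a compact subsemigroup. If `f` is an
idempotent with `f * e = e * f = f`, then `f ∈ L`, so minimality gives `L = K * f`; writing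
`e = x * f` yields `e * f = x * f * f = e`, hence `f = e * f = e`. -/

open Set

namespace Semigroup

variable {M : Type*} [Semigroup M] [TopologicalSpace M]

def IsCompactLeftIdeal (L : Set M) : Prop :=
  L.Nonempty ∧ IsCompact L ∧ ∀ a, ∀ b ∈ L, a * b ∈ L

theorem isCompactLeftIdeal_range_mul_right [CompactSpace M]
    (hcont : ∀ b : M, Continuous (· * b)) (b : M) :
    IsCompactLeftIdeal (range (· * b)) := by
  refine ⟨⟨b * b, b, rfl⟩, isCompact_range (hcont b), ?_⟩
  rintro a _ ⟨x, rfl⟩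
  exact ⟨a * x, mul_assoc a x b⟩

theorem IsCompactLeftIdeal.sInter_of_isChain [T2Space M] {c : Set (Set M)}
    (hc : ∀ L ∈ c, IsCompactLeftIdeal L) (hchain : IsChain (· ⊆ ·) c) (hne : c.Nonempty) :
    IsCompactLeftIdeal (⋂₀ c) := by
  obtain ⟨L₀, hL₀⟩ := hne
  have hclosed : ∀ L ∈ c, IsClosed L := fun L hL => (hc L hL).2.1.isClosed
  refine ⟨?_, (hc L₀ hL₀).2.1.of_isClosed_subset (isClosed_sInter hclosed)
    (sInter_subset_of_mem hL₀), fun a b hb => mem_sInter.2 fun L hL =>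
      (hc L hL).2.2 a b (mem_sInter.1 hb L hL)⟩
  have : Nonempty c := ⟨⟨L₀, hL₀⟩⟩
  exact IsCompact.nonempty_sInter_of_directed_nonempty_isCompact_isClosed
    (show IsChain (· ≥ ·) c from hchain.symm).directedOn (fun L hL => (hc L hL).1)
    (fun L hL => (hc L hL).2.1) hclosed

theorem exists_minimal_isCompactLeftIdeal [T2Space M] {L₀ : Set M}
    (hL₀ : IsCompactLeftIdeal L₀) : ∃ L : Set M, Minimal IsCompactLeftIdeal L := by
  obtain ⟨L, -, hL⟩ := zorn_superset_nonempty {L : Set M | IsCompactLeftIdeal L}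
    (fun c hc hchain hne => ⟨⋂₀ c, IsCompactLeftIdeal.sInter_of_isChain hc hchain hne,
      fun _ => sInter_subset_of_mem⟩) L₀ hL₀
  exact ⟨L, hL⟩

theorem range_mul_right_eq_of_minimal [CompactSpace M] (hcont : ∀ b : M, Continuous (· * b))
    {L : Set M} (hL : Minimal IsCompactLeftIdeal L) {b : M} (hb : b ∈ L) :
    range (· * b) = L :=
  hL.eq_of_subset (isCompactLeftIdeal_range_mul_right hcont b) <| by
    rintro _ ⟨x, rfl⟩
    exact hL.prop.2.2 x b hb

theorem exists_minimal_idempotent [CompactSpace M] [T2Space M] [Nonempty M]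
    (hcont : ∀ b : M, Continuous (· * b)) :
    ∃ e : M, IsIdempotentElem e ∧
      ∀ f : M, IsIdempotentElem f → f * e = f → e * f = f → f = e := by
  obtain ⟨a⟩ := ‹Nonempty M›
  obtain ⟨L, hL⟩ := exists_minimal_isCompactLeftIdeal (isCompactLeftIdeal_range_mul_right hcont a)
  obtain ⟨hLne, hLcompact, hLideal⟩ := hL.prop
  obtain ⟨e, heL, he⟩ := exists_idempotent_in_compact_subsemigroup hcont L hLne hLcompact
    fun x _ y hy => hLideal x y hy
  refine ⟨e, he, fun f hf hfe hef => ?_⟩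
  have hfL : f ∈ L := hfe ▸ hLideal f e heL
  obtain ⟨x, hx⟩ : e ∈ range (· * f) := (range_mul_right_eq_of_minimal hcont hL hfL).symm ▸ heL
  calc f = e * f := hef.symm
    _ = x * f * f := congrArg (· * f) hx.symm
    _ = e := by rw [mul_assoc, hf.eq]; exact hx

end Semigroup

/-- **Ellis' lemma.** Every compact semigroup (a nonempty compact Hausdorff space with an
associative multiplication which is continuous in the left variable) contains a minimal
idempotent: an element `e` with `e·e = e` such that every idempotent `f` satisfying
`f·e = e·f = f` equals `e`. -/
theorem compact_semigroup_exists_minimal_idempotent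
    {K : Type*} [TopologicalSpace K] [CompactSpace K] [T2Space K] [Nonempty K]
    (mul : K → K → K)
    (hassoc : ∀ a b c : K, mul (mul a b) c = mul a (mul b c))
    (hcont : ∀ b : K, Continuous fun a => mul a b) :
    ∃ e : K, mul e e = e ∧
      ∀ f : K, mul f f = f → mul f e = f → mul e f = f → f = e := by
  let : Semigroup K := { mul := mul, mul_assoc := hassoc }
  exact Semigroup.exists_minimal_idempotent hcont
end

section
/- Let K be a compact convex semigroup, i.e. a nonempty compact convex subset of a Hausdorff locally convex real topological vector space, equipped with an associative multiplication such that for every fixed b ∈ K the map a ↦ a·b is continuous and affine. If e ∈ K is a minimal idempotent, then e·x·e = e for every x ∈ K. -/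
/-!
Put `g = e x e`, so that `e g = g = g e`. Right multiplication by `g` is a continuous affine
self-map of `K`, so a cluster point of the Cesàro means of an orbit is a fixed point of it. Hence
`{a ∈ K | a g = a}` is a nonempty compact subsemigroup, and by the Ellis–Numakura lemma it contains
an idempotent `s`. From `s g = s` and `g e = g` we get `s e = s`, which makes `e s` an idempotent
below `e`; minimality gives `e s = e`, and then `g = e g = e s g = e s = e`.
-/

open Filter Topology Set Function

section CesaroMean

variable {E : Type*} [AddCommGroup E] [Module ℝ E]

/-- `cesaroMean T x n = (n + 1)⁻¹ • ∑ k ≤ n, T^[k] x`, written as a recursion of two-point convex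
combinations so that only two-point affinity of `T` is ever needed. -/
noncomputable def cesaroMean (T : E → E) (x : E) : ℕ → E
  | 0 => x
  | n + 1 => ((n + 1) / (n + 2) : ℝ) • cesaroMean T x n +
      (1 - (n + 1) / (n + 2) : ℝ) • T^[n + 1] x

lemma cesaroWeight_mem_Icc (n : ℕ) : ((n + 1) / (n + 2) : ℝ) ∈ Icc 0 1 :=
  ⟨by positivity, (div_le_one (by positivity)).2 (by linarith)⟩

lemma cesaroMean_mem {K : Set E} {T : E → E} (hK : Convex ℝ K) (hT : MapsTo T K K) {x : E}
    (hx : x ∈ K) (n : ℕ) : cesaroMean T x n ∈ K := by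
  induction n with
  | zero => exact hx
  | succ n ih =>
    have ⟨h0, h1⟩ := cesaroWeight_mem_Icc n
    exact hK ih (hT.iterate (n + 1) hx) h0 (by linarith) (by ring)

lemma apply_cesaroMean_sub {K : Set E} {T : E → E} (hK : Convex ℝ K) (hT : MapsTo T K K)
    (hT_aff : ∀ t ∈ Icc (0 : ℝ) 1, ∀ a ∈ K, ∀ a' ∈ K,
      T (t • a + (1 - t) • a') = t • T a + (1 - t) • T a')
    {x : E} (hx : x ∈ K) (n : ℕ) :
    T (cesaroMean T x n) - cesaroMean T x n = ((n : ℝ) + 1)⁻¹ • (T^[n + 1] x - x) := by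
  induction n with
  | zero => simp [cesaroMean]
  | succ n ih =>
    have hTn : T (cesaroMean T x n) = cesaroMean T x n + ((n : ℝ) + 1)⁻¹ • (T^[n + 1] x - x) :=
      eq_add_of_sub_eq' ih
    rw [cesaroMean, hT_aff _ (cesaroWeight_mem_Icc n) _ (cesaroMean_mem hK hT hx n) _
      (hT.iterate (n + 1) hx), hTn, ← iterate_succ_apply' T (n + 1)]
    push_cast
    match_scalars <;> field_simp <;> ring

variable [TopologicalSpace E] [IsTopologicalAddGroup E] [ContinuousSMul ℝ E]

lemma tendsto_apply_cesaroMean_sub {K : Set E} {T : E → E} (hKc : IsCompact K)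
    (hK : Convex ℝ K) (hT : MapsTo T K K)
    (hT_aff : ∀ t ∈ Icc (0 : ℝ) 1, ∀ a ∈ K, ∀ a' ∈ K,
      T (t • a + (1 - t) • a') = t • T a + (1 - t) • T a')
    {x : E} (hx : x ∈ K) :
    Tendsto (fun n => T (cesaroMean T x n) - cesaroMean T x n) atTop (𝓝 0) := by
  have hbdd : Bornology.IsVonNBounded ℝ ((· - x) '' K) :=
    (hKc.image (continuous_sub_right x)).isVonNBounded ℝ
  simp_rw [apply_cesaroMean_sub hK hT hT_aff hx]
  exact hbdd.smul_tendsto_zero (.of_forall fun n => mem_image_of_mem _ (hT.iterate (n + 1) hx))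
    (tendsto_inv_atTop_zero.comp (tendsto_natCast_atTop_atTop.atTop_add tendsto_const_nhds))

theorem IsCompact.exists_isFixedPt_of_affine [T2Space E] {K : Set E} {T : E → E} (hKc : IsCompact K)
    (hK : Convex ℝ K) (hK₀ : K.Nonempty) (hT : MapsTo T K K) (hT_cont : ContinuousOn T K)
    (hT_aff : ∀ t ∈ Icc (0 : ℝ) 1, ∀ a ∈ K, ∀ a' ∈ K,
      T (t • a + (1 - t) • a') = t • T a + (1 - t) • T a') :
    ∃ p ∈ K, IsFixedPt T p := by
  obtain ⟨x, hx⟩ := hK₀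
  have hmean : map (cesaroMean T x) atTop ≤ 𝓟 K :=
    tendsto_principal.2 (Eventually.of_forall (cesaroMean_mem hK hT hx))
  obtain ⟨p, hpK, hp⟩ := hKc.exists_mapClusterPt hmean
  have : (𝓝 p ⊓ map (cesaroMean T x) atTop).NeBot := hp
  have hlim : Tendsto (fun a => T a - a) (𝓝 p ⊓ map (cesaroMean T x) atTop) (𝓝 (T p - p)) :=
    ((hT_cont.sub continuousOn_id) p hpK).mono_left (le_inf inf_le_left (inf_le_right.trans hmean))
  have hzero : Tendsto (fun a => T a - a) (𝓝 p ⊓ map (cesaroMean T x) atTop) (𝓝 0) :=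
    (tendsto_map'_iff.2 (tendsto_apply_cesaroMean_sub hKc hK hT hT_aff hx)).mono_left inf_le_right
  exact ⟨p, hpK, sub_eq_zero.1 (tendsto_nhds_unique hlim hzero)⟩

end CesaroMean

theorem IsCompact.sep_isFixedPt {X : Type*} [TopologicalSpace X] [T2Space X] {K : Set X}
    {T : X → X} (hK : IsCompact K) (hT : ContinuousOn T K) : IsCompact {a ∈ K | IsFixedPt T a} :=
  hK.of_isClosed_subset ((hT.prodMk continuousOn_id).preimage_isClosed_of_isClosed hK.isClosed
    isClosed_diagonal) fun _ ha => ha.1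

theorem IsCompact.exists_idempotent {X : Type*} [TopologicalSpace X] [T2Space X] {S : Set X}
    (hS : IsCompact S) (hS₀ : S.Nonempty) (mul : X → X → X)
    (hmem : ∀ a ∈ S, ∀ b ∈ S, mul a b ∈ S)
    (hassoc : ∀ a ∈ S, ∀ b ∈ S, ∀ c ∈ S, mul (mul a b) c = mul a (mul b c))
    (hcont : ∀ b ∈ S, ContinuousOn (fun a => mul a b) S) :
    ∃ s ∈ S, mul s s = s := by
  let _ : Semigroup S :=
    { mul := fun a b => ⟨mul a b, hmem a a.2 b b.2⟩
      mul_assoc := fun a b c => Subtype.ext (hassoc a a.2 b b.2 c c.2) }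
  have : CompactSpace S := isCompact_iff_compactSpace.1 hS
  have : Nonempty S := hS₀.to_subtype
  obtain ⟨⟨s, hs⟩, hss⟩ := exists_idempotent_of_compact_t2_of_continuous_mul_left
    fun b : S => ((hcont b b.2).domRestrict).subtype_mk _
  exact ⟨s, hs, congrArg Subtype.val hss⟩

theorem compact_convex_semigroup_minimal_idempotent_absorbs_general
    {E : Type*} [AddCommGroup E] [Module ℝ E] [TopologicalSpace E]
    [IsTopologicalAddGroup E] [ContinuousSMul ℝ E] [T2Space E]
    (K : Set E) (hKcpt : IsCompact K) (hKconv : Convex ℝ K)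
    (mul : E → E → E)
    (hmem : ∀ a ∈ K, ∀ b ∈ K, mul a b ∈ K)
    (hassoc : ∀ a ∈ K, ∀ b ∈ K, ∀ c ∈ K, mul (mul a b) c = mul a (mul b c))
    (hcont : ∀ b ∈ K, ContinuousOn (fun a => mul a b) K)
    (haffine : ∀ t ∈ Set.Icc (0:ℝ) 1, ∀ a ∈ K, ∀ a' ∈ K, ∀ b ∈ K,
      mul (t • a + (1 - t) • a') b = t • mul a b + (1 - t) • mul a' b)
    (e : E) (heK : e ∈ K) (he : mul e e = e)
    (hmin : ∀ f ∈ K, mul f f = f → mul f e = f → mul e f = f → f = e) :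
    ∀ x ∈ K, mul (mul e x) e = e := by
  intro x hx
  set g := mul (mul e x) e
  have hexK : mul e x ∈ K := hmem e heK x hx
  have hgK : g ∈ K := hmem _ hexK e heK
  have hge : mul g e = g := by rw [hassoc _ hexK e heK e heK, he]
  have heg : mul e g = g := by rw [← hassoc e heK _ hexK e heK, ← hassoc e heK e heK x hx, he]
  obtain ⟨p, hpK, hpg⟩ := hKcpt.exists_isFixedPt_of_affine hKconv ⟨e, heK⟩
    (fun a ha => hmem a ha g hgK) (hcont g hgK)
    fun t ht a ha a' ha' => haffine t ht a ha a' ha' g hgK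
  obtain ⟨s, ⟨hsK, hsg : mul s g = s⟩, hss⟩ :=
    (hKcpt.sep_isFixedPt (hcont g hgK)).exists_idempotent ⟨p, hpK, hpg⟩ mul
      (fun a ha b hb => ⟨hmem a ha.1 b hb.1,
        (hassoc a ha.1 b hb.1 g hgK).trans (congrArg (mul a) hb.2)⟩)
      (fun a ha b hb c hc => hassoc a ha.1 b hb.1 c hc.1)
      fun b hb => (hcont b hb.1).mono fun a ha => ha.1
  have hse : mul s e = s := by rw [← hsg, hassoc s hsK g hgK e heK, hge]
  have hes : mul e s = e := hmin _ (hmem e heK s hsK)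
    (by rw [hassoc e heK s hsK _ (hmem e heK s hsK), ← hassoc s hsK e heK s hsK, hse, hss])
    (by rw [hassoc e heK s hsK e heK, hse]) (by rw [← hassoc e heK e heK s hsK, he])
  calc g = mul e g := heg.symm
    _ = mul (mul e s) g := by rw [hes]
    _ = e := by rw [hassoc e heK s hsK g hgK, hsg, hes]

/-- In a compact convex semigroup (a nonempty compact convex subset of a Hausdorff locally
convex real topological vector space, with an associative multiplication which is continuous
and affine in the left variable), if `e` is a minimal idempotent, then `e·x·e = e` for all
`x ∈ K`. -/
theorem compact_convex_semigroup_minimal_idempotent_absorbs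
    {E : Type*} [AddCommGroup E] [Module ℝ E] [TopologicalSpace E]
    [IsTopologicalAddGroup E] [ContinuousSMul ℝ E] [T2Space E] [LocallyConvexSpace ℝ E]
    (K : Set E) (hKcpt : IsCompact K) (hKconv : Convex ℝ K) (hKne : K.Nonempty)
    (mul : E → E → E)
    (hmem : ∀ a ∈ K, ∀ b ∈ K, mul a b ∈ K)
    (hassoc : ∀ a ∈ K, ∀ b ∈ K, ∀ c ∈ K, mul (mul a b) c = mul a (mul b c))
    (hcont : ∀ b ∈ K, ContinuousOn (fun a => mul a b) K)
    (haffine : ∀ t ∈ Set.Icc (0:ℝ) 1, ∀ a ∈ K, ∀ a' ∈ K, ∀ b ∈ K,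
      mul (t • a + (1 - t) • a') b = t • mul a b + (1 - t) • mul a' b)
    (e : E) (heK : e ∈ K) (he : mul e e = e)
    (hmin : ∀ f ∈ K, mul f f = f → mul f e = f → mul e f = f → f = e) :
    ∀ x ∈ K, mul (mul e x) e = e :=
  compact_convex_semigroup_minimal_idempotent_absorbs_general K hKcpt hKconv mul hmem hassoc hcont
    haffine e heK he hmin
end

section
/- Let K be a compact convex semigroup and let e, f ∈ K be two minimal idempotents. Then e·f·e = e and f·e·f = f. -/
/-!
Right translation `T a = a·b` is a continuous affine self-map of `K`. Its Cesàro averages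
`cₙ = (n+1)⁻¹ ∑_{k ≤ n} Tᵏ x₀` stay in `K` and satisfy `T cₙ - cₙ = (Tⁿ⁺¹ x₀ - x₀)/(n+1) → 0`;
as `(T - id)(K)` is compact, it contains `0`, i.e. some `x ∈ K` has `x·b = x`.
The elements fixed by right translation by `b = e·f` form a nonempty compact subsemigroup, hence
(Ellis) contain an idempotent `w` with `w·e·f = w`. Then `e·f·w·e` is an idempotent below `e`, so
it equals `e` by minimality, and `e·f·e = e·f·(w·e·f)·e = e·f·w·e = e`.
-/

open Filter Topology Function Set Pointwise

section FixedPoint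

theorem birkhoffAverage_succ_eq_smul_add_smul {α M : Type*} [AddCommGroup M] [Module ℝ M]
    (f : α → α) (g : α → M) (n : ℕ) (x : α) :
    birkhoffAverage ℝ f g (n + 1) x =
      ((n : ℝ) / (n + 1)) • birkhoffAverage ℝ f g n x + (1 - (n : ℝ) / (n + 1)) • g (f^[n] x) := by
  obtain rfl | hn := eq_or_ne n 0
  · simp
  have hn' : (n : ℝ) ≠ 0 := Nat.cast_ne_zero.mpr hn
  simp only [birkhoffAverage, birkhoffSum_succ, smul_add, smul_smul, Nat.cast_succ]
  congr 1
  · field_simp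
  · congr 1; field_simp; ring

variable {E : Type*} [AddCommGroup E] [Module ℝ E]

def IsAffineOn (K : Set E) (T : E → E) : Prop :=
  ∀ t ∈ Icc (0 : ℝ) 1, ∀ a ∈ K, ∀ a' ∈ K, T (t • a + (1 - t) • a') = t • T a + (1 - t) • T a'

theorem Convex.birkhoffAverage_mem_and_map_of_affine {K : Set E} (hKconv : Convex ℝ K)
    {T : E → E} (hTK : MapsTo T K K) (hTaff : IsAffineOn K T) {x₀ : E} (hx₀ : x₀ ∈ K) (n : ℕ) :
    birkhoffAverage ℝ T id (n + 1) x₀ ∈ K ∧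
      T (birkhoffAverage ℝ T id (n + 1) x₀) = birkhoffAverage ℝ T id (n + 1) (T x₀) := by
  induction n with
  | zero => simpa using hx₀
  | succ n ih =>
    have ht : ((n + 1 : ℕ) : ℝ) / ((n + 1 : ℕ) + 1) ∈ Icc (0 : ℝ) 1 :=
      ⟨by positivity, div_le_one_of_le₀ (by linarith) (by positivity)⟩
    have hiter : T^[n + 1] x₀ ∈ K := (hTK.iterate (n + 1)) hx₀
    rw [birkhoffAverage_succ_eq_smul_add_smul _ _ (n + 1) x₀,
      birkhoffAverage_succ_eq_smul_add_smul _ _ (n + 1) (T x₀), id, id]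
    refine ⟨hKconv ih.1 hiter ht.1 (sub_nonneg.mpr ht.2) (add_sub_cancel _ _), ?_⟩
    rw [hTaff _ ht _ ih.1 _ hiter, ih.2, ← iterate_succ_apply' T, iterate_succ_apply]

variable [TopologicalSpace E] [IsTopologicalAddGroup E] [ContinuousSMul ℝ E]

theorem Convex.exists_tendsto_map_sub_self_of_affine {K : Set E} (hKcpt : IsCompact K)
    (hKconv : Convex ℝ K) (hKne : K.Nonempty) {T : E → E} (hTK : MapsTo T K K)
    (hTaff : IsAffineOn K T) :
    ∃ c : ℕ → E, (∀ n, c n ∈ K) ∧ Tendsto (fun n => T (c n) - c n) atTop (𝓝 0) := by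
  obtain ⟨x₀, hx₀⟩ := hKne
  have havg := hKconv.birkhoffAverage_mem_and_map_of_affine hTK hTaff hx₀
  refine ⟨fun n => birkhoffAverage ℝ T id (n + 1) x₀, fun n => (havg n).1, ?_⟩
  have hε : Tendsto (fun n : ℕ => ((n + 1 : ℕ) : ℝ)⁻¹) atTop (𝓝 0) := by
    simpa using tendsto_one_div_add_atTop_nhds_zero_nat (𝕜 := ℝ)
  have hbdd : Bornology.IsVonNBounded ℝ (K - K) :=
    (hKcpt.isVonNBounded ℝ).sub (hKcpt.isVonNBounded ℝ)
  refine (hbdd.smul_tendsto_zero (Eventually.of_forall fun n =>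
    sub_mem_sub ((hTK.iterate (n + 1)) hx₀) hx₀) hε).congr fun n => ?_
  simp only [(havg n).2, birkhoffAverage_apply_sub_birkhoffAverage, Pi.smul_apply', id]

/-- Markov–Kakutani for a single map. -/
theorem Convex.exists_isFixedPt_of_affine [T2Space E] {K : Set E} (hKcpt : IsCompact K)
    (hKconv : Convex ℝ K) (hKne : K.Nonempty) {T : E → E} (hTK : MapsTo T K K)
    (hTc : ContinuousOn T K) (hTaff : IsAffineOn K T) :
    ∃ x ∈ K, IsFixedPt T x := by
  obtain ⟨c, hcK, hc⟩ := hKconv.exists_tendsto_map_sub_self_of_affine hKcpt hKne hTK hTaff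
  have hclosed : IsClosed ((fun y => T y - y) '' K) :=
    (hKcpt.image_of_continuousOn (hTc.sub continuousOn_id)).isClosed
  obtain ⟨x, hxK, hx⟩ := hclosed.mem_of_tendsto hc
    (Eventually.of_forall fun n => mem_image_of_mem _ (hcK n))
  exact ⟨x, hxK, sub_eq_zero.mp hx⟩

end FixedPoint

section Semigroup

variable {M : Type*}

def IsMinimalIdempotent [Mul M] (e : M) : Prop :=
  IsIdempotentElem e ∧ ∀ g : M, IsIdempotentElem g → g * e = g → e * g = g → g = e

theorem IsMinimalIdempotent.mul_mul_eq_self_of_mul_eq [Semigroup M] {e f w : M}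
    (he : IsMinimalIdempotent e) (hw : IsIdempotentElem w) (hwef : w * (e * f) = w) :
    e * f * e = e := by
  have hee : ∀ x, e * (e * x) = e * x := fun x => by rw [← mul_assoc, he.1.eq]
  have hww : ∀ x, w * (w * x) = w * x := fun x => by rw [← mul_assoc, hw.eq]
  have hwef' : ∀ x, w * (e * (f * x)) = w * x := fun x => by
    rw [← mul_assoc e, ← mul_assoc w, hwef]
  have hg : e * f * w * e = e := he.2 _
    (by simp only [IsIdempotentElem, mul_assoc, hee, hwef', hww])
    (by simp only [mul_assoc, he.1.eq]) (by simp only [mul_assoc, hee])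
  calc e * f * e = e * f * w * e * (f * e) := by rw [hg, mul_assoc]
    _ = e * f * w * e := by simp only [mul_assoc, hwef']
    _ = e := hg

variable [Semigroup M] [TopologicalSpace M] [T2Space M] [CompactSpace M]

theorem exists_isIdempotentElem_mul_eq_self (hcont : ∀ r : M, Continuous (· * r)) {b x : M}
    (hx : x * b = x) : ∃ w, IsIdempotentElem w ∧ w * b = w := by
  obtain ⟨w, hwb, hw⟩ := exists_idempotent_in_compact_subsemigroup hcont {y | y * b = y} ⟨x, hx⟩
    (isClosed_eq (hcont b) continuous_id).isCompact
    fun y _ z (hz : z * b = z) => show y * z * b = y * z by rw [mul_assoc, hz]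
  exact ⟨w, hw, hwb⟩

theorem IsMinimalIdempotent.mul_mul_eq_self (hcont : ∀ r : M, Continuous (· * r))
    (hfix : ∀ b : M, ∃ x, x * b = x) {e : M} (he : IsMinimalIdempotent e) (f : M) :
    e * f * e = e := by
  obtain ⟨x, hx⟩ := hfix (e * f)
  obtain ⟨w, hw, hwef⟩ := exists_isIdempotentElem_mul_eq_self hcont hx
  exact he.mul_mul_eq_self_of_mul_eq hw hwef

end Semigroup

theorem compact_convex_semigroup_two_minimal_idempotents_general
    {E : Type*} [AddCommGroup E] [Module ℝ E] [TopologicalSpace E]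
    [IsTopologicalAddGroup E] [ContinuousSMul ℝ E] [T2Space E]
    (K : Set E) (hKcpt : IsCompact K) (hKconv : Convex ℝ K)
    (mul : E → E → E)
    (hmem : ∀ a ∈ K, ∀ b ∈ K, mul a b ∈ K)
    (hassoc : ∀ a ∈ K, ∀ b ∈ K, ∀ c ∈ K, mul (mul a b) c = mul a (mul b c))
    (hcont : ∀ b ∈ K, ContinuousOn (fun a => mul a b) K)
    (haffine : ∀ t ∈ Set.Icc (0:ℝ) 1, ∀ a ∈ K, ∀ a' ∈ K, ∀ b ∈ K,
      mul (t • a + (1 - t) • a') b = t • mul a b + (1 - t) • mul a' b)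
    (e : E) (heK : e ∈ K) (he : mul e e = e)
    (hemin : ∀ g ∈ K, mul g g = g → mul g e = g → mul e g = g → g = e)
    (f : E) (hfK : f ∈ K) (hf : mul f f = f)
    (hfmin : ∀ g ∈ K, mul g g = g → mul g f = g → mul f g = g → g = f) :
    mul (mul e f) e = e ∧ mul (mul f e) f = f := by
  let : Semigroup K :=
    { mul := fun a b => ⟨mul a b, hmem _ a.2 _ b.2⟩
      mul_assoc := fun a b c => Subtype.ext (hassoc _ a.2 _ b.2 _ c.2) }
  have : CompactSpace K := isCompact_iff_compactSpace.mp hKcpt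
  have hcontK : ∀ b : K, Continuous (· * b) := fun b =>
    (hcont b b.2).domRestrict.subtype_mk fun a => hmem _ a.2 _ b.2
  have hfixK : ∀ b : K, ∃ x : K, x * b = x := fun b => by
    obtain ⟨x, hxK, hx⟩ := hKconv.exists_isFixedPt_of_affine hKcpt ⟨b, b.2⟩
      (fun a ha => hmem a ha b b.2) (hcont b b.2)
      (fun t ht a ha a' ha' => haffine t ht a ha a' ha' b b.2)
    exact ⟨⟨x, hxK⟩, Subtype.ext hx⟩
  have hminK : ∀ x : K, mul x x = x →
      (∀ g ∈ K, mul g g = g → mul g x = g → mul x g = g → g = x) → IsMinimalIdempotent x :=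
    fun x hx hxmin => ⟨Subtype.ext hx, fun g hg hgx hxg => Subtype.ext <| hxmin g g.2
      (congrArg Subtype.val hg) (congrArg Subtype.val hgx) (congrArg Subtype.val hxg)⟩
  exact ⟨congrArg Subtype.val ((hminK ⟨e, heK⟩ he hemin).mul_mul_eq_self hcontK hfixK ⟨f, hfK⟩),
    congrArg Subtype.val ((hminK ⟨f, hfK⟩ hf hfmin).mul_mul_eq_self hcontK hfixK ⟨e, heK⟩)⟩

/-- In a compact convex semigroup, if `e` and `f` are two minimal idempotents, then
`e·f·e = e` and `f·e·f = f`. -/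
theorem compact_convex_semigroup_two_minimal_idempotents
    {E : Type*} [AddCommGroup E] [Module ℝ E] [TopologicalSpace E]
    [IsTopologicalAddGroup E] [ContinuousSMul ℝ E] [T2Space E] [LocallyConvexSpace ℝ E]
    (K : Set E) (hKcpt : IsCompact K) (hKconv : Convex ℝ K) (hKne : K.Nonempty)
    (mul : E → E → E)
    (hmem : ∀ a ∈ K, ∀ b ∈ K, mul a b ∈ K)
    (hassoc : ∀ a ∈ K, ∀ b ∈ K, ∀ c ∈ K, mul (mul a b) c = mul a (mul b c))
    (hcont : ∀ b ∈ K, ContinuousOn (fun a => mul a b) K)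
    (haffine : ∀ t ∈ Set.Icc (0:ℝ) 1, ∀ a ∈ K, ∀ a' ∈ K, ∀ b ∈ K,
      mul (t • a + (1 - t) • a') b = t • mul a b + (1 - t) • mul a' b)
    (e : E) (heK : e ∈ K) (he : mul e e = e)
    (hemin : ∀ g ∈ K, mul g g = g → mul g e = g → mul e g = g → g = e)
    (f : E) (hfK : f ∈ K) (hf : mul f f = f)
    (hfmin : ∀ g ∈ K, mul g g = g → mul g f = g → mul f g = g → g = f) :
    mul (mul e f) e = e ∧ mul (mul f e) f = f :=
  compact_convex_semigroup_two_minimal_idempotents_general K hKcpt hKconv mul hmem hassoc hcont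
    haffine e heK he hemin f hfK hf hfmin
end

section
/- Let A be a unital C*-algebra and let Φ : A → A be a unital positive linear map satisfying the Schwarz inequality Φ(x)*Φ(x) ≤ Φ(x*x) for all x ∈ A. Suppose Φ is idempotent (Φ ∘ Φ = Φ) and faithful (Φ(x*x) = 0 implies x = 0). Then for every x in the range of Φ one has Φ(x*x) = x*x; in particular x*x belongs to the range of Φ. -/
/-!
For a fixed point `x = Φ x` the Schwarz inequality gives `star x * x ≤ Φ (star x * x)`, and by
idempotence `Φ` kills the positive difference `Φ (star x * x) - star x * x`. In a C*-algebra every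
positive element has the form `star b * b`, so faithfulness forces that difference to vanish.
-/

section FaithfulMap

variable {A : Type*} [NonUnitalCStarAlgebra A] [PartialOrder A] [StarOrderedRing A]

theorem eq_zero_of_nonneg_of_map_eq_zero {B : Type*} [Zero B] {Φ : A → B}
    (hfaithful : ∀ x : A, Φ (star x * x) = 0 → x = 0) {a : A} (ha : 0 ≤ a) (hΦa : Φ a = 0) :
    a = 0 := by
  obtain ⟨b, rfl⟩ := CStarAlgebra.nonneg_iff_eq_star_mul_self.mp ha
  rw [hfaithful b hΦa, star_zero, zero_mul]

theorem map_eq_self_of_le_map {F : Type*} [FunLike F A A] [AddMonoidHomClass F A A] {Φ : F}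
    (hidem : ∀ x : A, Φ (Φ x) = Φ x) (hfaithful : ∀ x : A, Φ (star x * x) = 0 → x = 0)
    {a : A} (ha : a ≤ Φ a) : Φ a = a := by
  have hΦ : Φ (Φ a - a) = 0 := by rw [map_sub, hidem, sub_self]
  exact sub_eq_zero.mp (eq_zero_of_nonneg_of_map_eq_zero hfaithful (sub_nonneg.mpr ha) hΦ)

end FaithfulMap

theorem range_of_faithful_idempotent_schwarz_map_closed_under_star_mul_self_general
    {A : Type*} [NormedRing A] [StarRing A] [CStarRing A]
    [NormedAlgebra ℂ A] [CompleteSpace A] [StarModule ℂ A]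
    [PartialOrder A] [StarOrderedRing A]
    (Φ : A →ₗ[ℂ] A)
    (hschwarz : ∀ x : A, star (Φ x) * Φ x ≤ Φ (star x * x))
    (hidem : ∀ x : A, Φ (Φ x) = Φ x)
    (hfaithful : ∀ x : A, Φ (star x * x) = 0 → x = 0) :
    ∀ x ∈ Set.range Φ, Φ (star x * x) = star x * x ∧ star x * x ∈ Set.range Φ := by
  let : CStarAlgebra A := CStarAlgebra.mk
  rintro _ ⟨y, rfl⟩
  have hle : star (Φ y) * Φ y ≤ Φ (star (Φ y) * Φ y) := by
    simpa only [hidem] using hschwarz (Φ y)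
  have hfix := map_eq_self_of_le_map hidem hfaithful hle
  exact ⟨hfix, _, hfix⟩

/-- If `Φ` is a unital positive linear map on a unital C*-algebra satisfying the Schwarz
inequality which is idempotent and faithful, then `Φ(x*x) = x*x` for every `x` in the range
of `Φ`; in particular `x*x` belongs to the range of `Φ`. -/
theorem range_of_faithful_idempotent_schwarz_map_closed_under_star_mul_self
    {A : Type*} [NormedRing A] [StarRing A] [CStarRing A]
    [NormedAlgebra ℂ A] [CompleteSpace A] [StarModule ℂ A]
    [PartialOrder A] [StarOrderedRing A]
    (Φ : A →ₗ[ℂ] A)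
    (hunital : Φ 1 = 1)
    (hpos : ∀ a : A, 0 ≤ a → 0 ≤ Φ a)
    (hschwarz : ∀ x : A, star (Φ x) * Φ x ≤ Φ (star x * x))
    (hidem : ∀ x : A, Φ (Φ x) = Φ x)
    (hfaithful : ∀ x : A, Φ (star x * x) = 0 → x = 0) :
    ∀ x ∈ Set.range Φ, Φ (star x * x) = star x * x ∧ star x * x ∈ Set.range Φ :=
  range_of_faithful_idempotent_schwarz_map_closed_under_star_mul_self_general Φ hschwarz hidem
    hfaithful
end

section
/- Let A be a unital C*-algebra, let Φ, Ψ : A → A be unital positive linear maps each satisfying the Schwarz inequality, and suppose Φ is faithful. Let u ∈ A be a unitary such that Φ(x·u) = Φ(x)·u and Φ(u*·x) = u*·Φ(x) for all x ∈ A. If Φ(Ψ(u)) = u, then Ψ(u) = u. -/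
/-!
Put `v = Ψ u`. The Schwarz inequality for `Ψ` gives `v* v ≤ 1`. A positive map preserves `*`, so
the bimodule property turns `Φ (v* u)` and `Φ (u* v)` into `Φ(v)* u = 1` and `u* Φ(v) = 1`; hence
`0 ≤ Φ ((v - u)* (v - u)) = Φ (v* v) - 1 ≤ 0`, and faithfulness of `Φ` forces `v = u`.
-/

namespace PositiveLinearMap

variable {A : Type*} [Ring A] [StarRing A] [PartialOrder A] [StarOrderedRing A]
  [Module ℂ A] [StarModule ℂ A] [SelfAdjointDecompose A]

lemma map_star_sub_mul_sub_eq (Φ : A →ₚ[ℂ] A) (hΦ₁ : Φ 1 = 1) {u v : A}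
    (hu : star u * u = 1) (hΦv : Φ v = u)
    (hright : Φ (star v * u) = Φ (star v) * u) (hleft : Φ (star u * v) = star u * Φ v) :
    Φ (star (v - u) * (v - u)) = Φ (star v * v) - 1 := by
  have hvu : Φ (star v * u) = 1 := by rw [hright, map_star, hΦv, hu]
  have huv : Φ (star u * v) = 1 := by rw [hleft, hΦv, hu]
  have hexpand : star (v - u) * (v - u) = star v * v - star v * u - star u * v + star u * u := by
    rw [star_sub]; noncomm_ring
  rw [hexpand, map_add, map_sub, map_sub, hvu, huv, hu, hΦ₁]
  abel

lemma eq_of_map_eq_of_star_mul_self_le_one (Φ : A →ₚ[ℂ] A) (hΦ₁ : Φ 1 = 1)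
    (hΦfaithful : ∀ x, Φ (star x * x) = 0 → x = 0) {u v : A}
    (hu : star u * u = 1) (hΦv : Φ v = u)
    (hright : Φ (star v * u) = Φ (star v) * u) (hleft : Φ (star u * v) = star u * Φ v)
    (hv : star v * v ≤ 1) : v = u := by
  have hle : Φ (star v * v) ≤ 1 := hΦ₁ ▸ Φ.monotone' hv
  have hzero : Φ (star (v - u) * (v - u)) = 0 := by
    refine le_antisymm ?_ (Φ.map_nonneg (star_mul_self_nonneg _))
    rw [map_star_sub_mul_sub_eq Φ hΦ₁ hu hΦv hright hleft]
    exact sub_nonpos.mpr hle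
  exact sub_eq_zero.mp (hΦfaithful _ hzero)

end PositiveLinearMap

theorem faithful_schwarz_map_fixes_unitary_general
    {A : Type*} [NormedRing A] [StarRing A] [CStarRing A]
    [NormedAlgebra ℂ A] [CompleteSpace A] [StarModule ℂ A]
    [PartialOrder A] [StarOrderedRing A]
    (Φ Ψ : A →ₗ[ℂ] A)
    (hΦunital : Φ 1 = 1)
    (hΦpos : ∀ a : A, 0 ≤ a → 0 ≤ Φ a)
    (hΨunital : Ψ 1 = 1)
    (hΨschwarz : ∀ x : A, star (Ψ x) * Ψ x ≤ Ψ (star x * x))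
    (hΦfaithful : ∀ x : A, Φ (star x * x) = 0 → x = 0)
    (u : A) (hu₁ : star u * u = 1)
    (hbimod₁ : ∀ x : A, Φ (x * u) = Φ x * u)
    (hbimod₂ : ∀ x : A, Φ (star u * x) = star u * Φ x)
    (hfix : Φ (Ψ u) = u) :
    Ψ u = u := by
  -- the bundled instance provides `SelfAdjointDecompose A` (positive and negative parts)
  let : CStarAlgebra A := { }
  have hΨu : star (Ψ u) * Ψ u ≤ 1 := by simpa [hu₁, hΨunital] using hΨschwarz u
  exact (PositiveLinearMap.mk₀ Φ hΦpos).eq_of_map_eq_of_star_mul_self_le_one hΦunital hΦfaithful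
    hu₁ hfix (hbimod₁ _) (hbimod₂ _) hΨu

/-- Let `Φ, Ψ` be unital positive linear maps on a unital C*-algebra satisfying the Schwarz
inequality, with `Φ` faithful. If `u` is a unitary such that `Φ(x·u) = Φ(x)·u` and
`Φ(u*·x) = u*·Φ(x)` for all `x`, and `Φ(Ψ(u)) = u`, then `Ψ(u) = u`. -/
theorem faithful_schwarz_map_fixes_unitary
    {A : Type*} [NormedRing A] [StarRing A] [CStarRing A]
    [NormedAlgebra ℂ A] [CompleteSpace A] [StarModule ℂ A]
    [PartialOrder A] [StarOrderedRing A]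
    (Φ Ψ : A →ₗ[ℂ] A)
    (hΦunital : Φ 1 = 1)
    (hΦpos : ∀ a : A, 0 ≤ a → 0 ≤ Φ a)
    (hΦschwarz : ∀ x : A, star (Φ x) * Φ x ≤ Φ (star x * x))
    (hΨunital : Ψ 1 = 1)
    (hΨpos : ∀ a : A, 0 ≤ a → 0 ≤ Ψ a)
    (hΨschwarz : ∀ x : A, star (Ψ x) * Ψ x ≤ Ψ (star x * x))
    (hΦfaithful : ∀ x : A, Φ (star x * x) = 0 → x = 0)
    (u : A) (hu₁ : star u * u = 1) (hu₂ : u * star u = 1)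
    (hbimod₁ : ∀ x : A, Φ (x * u) = Φ x * u)
    (hbimod₂ : ∀ x : A, Φ (star u * x) = star u * Φ x)
    (hfix : Φ (Ψ u) = u) :
    Ψ u = u :=
  faithful_schwarz_map_fixes_unitary_general Φ Ψ hΦunital hΦpos hΨunital hΨschwarz hΦfaithful u hu₁
    hbimod₁ hbimod₂ hfix
end

section
/- Let A be a unital C*-algebra and let K be a set of unital positive linear maps A → A, each satisfying the Schwarz inequality, that is closed under composition. Let Φ ∈ K be faithful and satisfy Φ ∘ Ψ ∘ Φ = Φ for every Ψ ∈ K, and suppose Φ satisfies the bimodule property Φ(x·b) = Φ(x)·b and Φ(b·x) = b·Φ(x) for all x ∈ A and all b in the range of Φ. Then every unitary u belonging to the range of Φ is fixed by every element of K: Ψ(u) = u for all Ψ ∈ K. -/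
/-!
From `Φ ∘ Ψ ∘ Φ = Φ` we get `Φ (Ψ u) = u`. As `Φ` is star-preserving (being positive) and right `u`-linear, expanding
gives `Φ (star (Ψ u - u) * (Ψ u - u)) = Φ (star (Ψ u) * Ψ u) - 1`, and by the Schwarz inequality for
`Ψ` the right side is at most `Φ (Ψ (star u * u)) - 1 = 0`. So this positive element vanishes, and
faithfulness of `Φ` gives `Ψ u = u`.
-/

section ConditionalExpectation

variable {A F : Type*} [Ring A] [StarRing A] [FunLike F A A] [AddMonoidHomClass F A A]

lemma map_star_sub_mul_sub_eq_map_star_mul_self_sub_one (Φ : F)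
    (hΦ_star : ∀ x, Φ (star x) = star (Φ x)) (hΦ_one : Φ 1 = 1) {u y : A}
    (hu : star u * u = 1) (hΦ_mul_u : ∀ x, Φ (x * u) = Φ x * u) (hy : Φ y = u) :
    Φ (star (y - u) * (y - u)) = Φ (star y * y) - 1 := by
  have h_yu : Φ (star y * u) = 1 := by rw [hΦ_mul_u, hΦ_star, hy, hu]
  have h_uy : Φ (star u * y) = 1 := by
    rw [← star_star y, ← star_mul, hΦ_star, h_yu, star_one]
  have h_expand : star (y - u) * (y - u) = star y * y - star y * u - star u * y + star u * u := by
    rw [star_sub]; noncomm_ring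
  rw [h_expand, map_add, map_sub, map_sub, h_yu, h_uy, hu, hΦ_one]
  abel

lemma eq_of_map_eq_of_map_star_mul_self_le_one [PartialOrder A] [StarOrderedRing A] (Φ : F)
    (hΦ_star : ∀ x, Φ (star x) = star (Φ x)) (hΦ_one : Φ 1 = 1)
    (hΦ_pos : ∀ a, 0 ≤ a → 0 ≤ Φ a) (hΦ_faithful : ∀ x, Φ (star x * x) = 0 → x = 0)
    {u y : A} (hu : star u * u = 1) (hΦ_mul_u : ∀ x, Φ (x * u) = Φ x * u) (hy : Φ y = u)
    (hy_le : Φ (star y * y) ≤ 1) : y = u := by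
  refine sub_eq_zero.1 <| hΦ_faithful _ <| le_antisymm ?_ (hΦ_pos _ (star_mul_self_nonneg _))
  rw [map_star_sub_mul_sub_eq_map_star_mul_self_sub_one Φ hΦ_star hΦ_one hu hΦ_mul_u hy]
  exact sub_nonpos.2 hy_le

end ConditionalExpectation

theorem unitaries_in_range_fixed_by_semigroup_general
    {A : Type*} [NormedRing A] [StarRing A] [CStarRing A]
    [NormedAlgebra ℂ A] [CompleteSpace A] [StarModule ℂ A]
    [PartialOrder A] [StarOrderedRing A]
    (K : Set (A →ₗ[ℂ] A))
    (hK : ∀ Ψ ∈ K, Ψ 1 = 1 ∧ (∀ a : A, 0 ≤ a → 0 ≤ Ψ a) ∧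
      (∀ x : A, star (Ψ x) * Ψ x ≤ Ψ (star x * x)))
    (Φ : A →ₗ[ℂ] A) (hΦK : Φ ∈ K)
    (hΦfaithful : ∀ x : A, Φ (star x * x) = 0 → x = 0)
    (hΦmin : ∀ Ψ ∈ K, Φ ∘ₗ Ψ ∘ₗ Φ = Φ)
    (hbimod : ∀ x : A, ∀ b ∈ Set.range Φ, Φ (x * b) = Φ x * b ∧ Φ (b * x) = b * Φ x) :
    ∀ u ∈ Set.range Φ, star u * u = 1 → u * star u = 1 →
      ∀ Ψ ∈ K, Ψ u = u := by
  let : CStarAlgebra A := {}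
  obtain ⟨hΦ_one, hΦ_pos, -⟩ := hK Φ hΦK
  let Φpos := PositiveLinearMap.mk₀ Φ hΦ_pos
  have hΦ_star (x : A) : Φ (star x) = star (Φ x) := map_star Φpos x
  rintro u ⟨v, rfl⟩ hu - Ψ hΨK
  obtain ⟨hΨ_one, -, hΨ_schwarz⟩ := hK Ψ hΨK
  have hΦ_mul_u (x : A) : Φ (x * Φ v) = Φ x * Φ v := (hbimod x _ ⟨v, rfl⟩).1
  have hΦΨ : Φ (Ψ (Φ v)) = Φ v := LinearMap.congr_fun (hΦmin Ψ hΨK) v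
  have hΨ_le : Φ (star (Ψ (Φ v)) * Ψ (Φ v)) ≤ 1 :=
    calc Φ (star (Ψ (Φ v)) * Ψ (Φ v)) ≤ Φ (Ψ (star (Φ v) * Φ v)) := Φpos.monotone (hΨ_schwarz _)
      _ = 1 := by rw [hu, hΨ_one, hΦ_one]
  exact eq_of_map_eq_of_map_star_mul_self_le_one Φ hΦ_star hΦ_one hΦ_pos hΦfaithful hu
    hΦ_mul_u hΦΨ hΨ_le

/-- Let `K` be a composition-closed set of unital positive linear maps (each satisfying the
Schwarz inequality) on a unital C*-algebra `A`. If `Φ ∈ K` is faithful, satisfies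
`Φ ∘ Ψ ∘ Φ = Φ` for every `Ψ ∈ K`, and is a bimodule map over its range, then every unitary
in the range of `Φ` is fixed by every element of `K`. -/
theorem unitaries_in_range_fixed_by_semigroup
    {A : Type*} [NormedRing A] [StarRing A] [CStarRing A]
    [NormedAlgebra ℂ A] [CompleteSpace A] [StarModule ℂ A]
    [PartialOrder A] [StarOrderedRing A]
    (K : Set (A →ₗ[ℂ] A))
    (hK : ∀ Ψ ∈ K, Ψ 1 = 1 ∧ (∀ a : A, 0 ≤ a → 0 ≤ Ψ a) ∧
      (∀ x : A, star (Ψ x) * Ψ x ≤ Ψ (star x * x)))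
    (hKcomp : ∀ Φ ∈ K, ∀ Ψ ∈ K, Φ ∘ₗ Ψ ∈ K)
    (Φ : A →ₗ[ℂ] A) (hΦK : Φ ∈ K)
    (hΦfaithful : ∀ x : A, Φ (star x * x) = 0 → x = 0)
    (hΦmin : ∀ Ψ ∈ K, Φ ∘ₗ Ψ ∘ₗ Φ = Φ)
    (hbimod : ∀ x : A, ∀ b ∈ Set.range Φ, Φ (x * b) = Φ x * b ∧ Φ (b * x) = b * Φ x) :
    ∀ u ∈ Set.range Φ, star u * u = 1 → u * star u = 1 →
      ∀ Ψ ∈ K, Ψ u = u :=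
  unitaries_in_range_fixed_by_semigroup_general K hK Φ hΦK hΦfaithful hΦmin hbimod
end
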